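/- (Wittwer's sharp square function bound.) There is an absolute constant C > 0 such that for every weight w ∈ A₂^d and every dyadic interval J, (1/|J|) Σ_{I∈D(J)} ((m_{I⁻}w − m_{I⁺}w)/(2 m_I w))² · |I| · m_I w ≤ C · ‖w‖_{A₂^d} · m_J w. -/

import Mathlib

open MeasureTheory Set

noncomputable section

/-- The dyadic interval `[k 2^{-j}, (k+1) 2^{-j})`, indexed by `I = (j, k)`. -/
def dyadicI (I : ℤ × ℤ) : Set ℝ :=
  Set.Ico ((I.2 : ℝ) * 2 ^ (-I.1)) (((I.2 : ℝ) + 1) * 2 ^ (-I.1))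

/-- The length `|I| = 2^{-j}` of the dyadic interval indexed by `I = (j, k)`. -/
def len (I : ℤ × ℤ) : ℝ := 2 ^ (-I.1)

/-- The left half `I⁺` of the dyadic interval `I`. -/
def leftHalf (I : ℤ × ℤ) : ℤ × ℤ := (I.1 + 1, 2 * I.2)

/-- The right half `I⁻` of the dyadic interval `I`. -/
def rightHalf (I : ℤ × ℤ) : ℤ × ℤ := (I.1 + 1, 2 * I.2 + 1)

/-- The average `m_I f = (1/|I|) ∫_I f`. -/
def avg (f : ℝ → ℝ) (I : ℤ × ℤ) : ℝ := (len I)⁻¹ * ∫ x in dyadicI I, f x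

/-- The Haar function `h_I = |I|^{-1/2} (χ_{I⁺} - χ_{I⁻})`. -/
def haar (I : ℤ × ℤ) (x : ℝ) : ℝ :=
  (Real.sqrt (len I))⁻¹ *
    ((dyadicI (leftHalf I)).indicator (fun _ => (1 : ℝ)) x -
      (dyadicI (rightHalf I)).indicator (fun _ => (1 : ℝ)) x)

/-- The Haar coefficient `b_I = ⟨b, h_I⟩`. -/
def haarCoef (b : ℝ → ℝ) (I : ℤ × ℤ) : ℝ := ∫ x, b x * haar I x

/-- The dyadic BMO norm of `b`. -/
def bmoNorm (b : ℝ → ℝ) : ℝ :=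
  Real.sqrt (⨆ I : ℤ × ℤ, (len I)⁻¹ * ∫ x in dyadicI I, (b x - avg b I) ^ 2)

/-- The `A₂^d` characteristic `‖w‖_{A₂^d} = sup_I (m_I w)(m_I w⁻¹)`. -/
def A2const (w : ℝ → ℝ) : ℝ :=
  ⨆ I : ℤ × ℤ, avg w I * avg (fun x => (w x)⁻¹) I


/-!
The Bellman function `B(u, v) = 3u - 3/v + (2/√Q) √(u/v)` on the domain `1 ≤ uv ≤ Q`
satisfies `0 ≤ B ≤ 5u`, and along every segment its second derivative is at most
`-x² / (16 Q u)`, so that `(B(u - x, v - y) + B(u + x, v + y)) / 2 + x² / (32 Q u) ≤ B(u, v)`.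
Evaluating `B` at `(m_I w, m_I w⁻¹)` and summing these midpoint inequalities over the dyadic
subintervals of `J` telescopes to `|J|⁻¹ Σ_I (…) ≤ 32 Q B(m_J w, m_J w⁻¹) ≤ 160 Q m_J w`.
-/

theorem average_endpoints_add_le_of_deriv2_le {f f' f'' : ℝ → ℝ} {c : ℝ}
    (hf : ∀ t ∈ Icc (-1 : ℝ) 1, HasDerivAt f (f' t) t)
    (hf' : ∀ t ∈ Ioo (-1 : ℝ) 1, HasDerivAt f' (f'' t) t)
    (hf'' : ∀ t ∈ Ioo (-1 : ℝ) 1, f'' t ≤ -c) :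
    (f (-1) + f 1) / 2 + c / 2 ≤ f 0 := by
  have hconcave : ConcaveOn ℝ (Icc (-1 : ℝ) 1) (fun t => f t + c / 2 * t ^ 2) := by
    have hsq (t : ℝ) : HasDerivAt (fun t => c / 2 * t ^ 2) (c * t) t :=
      ((hasDerivAt_pow 2 t).const_mul (c / 2)).congr_deriv (by ring)
    refine concaveOn_of_hasDerivWithinAt2_nonpos (convex_Icc _ _)
      (f' := fun t => f' t + c * t) (f'' := fun t => f'' t + c) ?_ ?_ ?_ ?_
    · exact fun t ht => ((hf t ht).continuousAt.add (hsq t).continuousAt).continuousWithinAt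
    all_goals intro t ht; rw [interior_Icc] at ht
    · exact ((hf t (Ioo_subset_Icc_self ht)).add (hsq t)).hasDerivWithinAt
    · exact ((hf' t ht).add (hasDerivAt_const_mul c)).hasDerivWithinAt
    · linarith [hf'' t ht]
  have := hconcave.2 (left_mem_Icc.2 (by norm_num)) (right_mem_Icc.2 (by norm_num))
    (by norm_num : (0 : ℝ) ≤ 1 / 2) (by norm_num : (0 : ℝ) ≤ 1 / 2) (by norm_num)
  norm_num at this
  linarith

lemma hasDerivAt_sqrt_affine {a b t : ℝ} (h : 0 < a + b * t) :
    HasDerivAt (fun s => √(a + b * s)) (b / (2 * √(a + b * t))) t :=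
  ((hasDerivAt_const_mul b).const_add a).sqrt h.ne'

lemma affine_mem_Ioc {a b t : ℝ} (h₁ : 0 < a - b) (h₂ : 0 < a + b)
    (ht : t ∈ Icc (-1 : ℝ) 1) : a + b * t ∈ Ioc 0 (2 * a) := by
  obtain ⟨ht₁, ht₂⟩ := ht
  rcases le_total 0 b with hb | hb <;> constructor <;> nlinarith

def bellman (Q u v : ℝ) : ℝ := 3 * u - 3 * v⁻¹ + 2 / √Q * (√u / √v)

/- The first and second derivatives of `bellman Q` in direction `(x, y)` at the point `(p², r²)`,
written in the square-root variables `q = √Q`, `p`, `r`. -/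

def bellmanDeriv (q p r x y : ℝ) : ℝ :=
  3 * x + 3 * y / r ^ 4 + 2 / q * (x / (2 * p * r) - p * y / (2 * r ^ 3))

def bellmanDeriv2 (q p r x y : ℝ) : ℝ :=
  -6 * y ^ 2 / r ^ 6 +
    2 / q * (-x ^ 2 / (4 * p ^ 3 * r) - x * y / (2 * p * r ^ 3) + 3 * p * y ^ 2 / (4 * r ^ 5))

section Line

variable {Q u v x y t : ℝ}

lemma hasDerivAt_bellman_line (hP : 0 < u + x * t) (hR : 0 < v + y * t) :
    HasDerivAt (fun s => bellman Q (u + x * s) (v + y * s))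
      (bellmanDeriv √Q √(u + x * t) √(v + y * t) x y) t := by
  have hu : HasDerivAt (fun s => u + x * s) x t := (hasDerivAt_const_mul x).const_add u
  have hv : HasDerivAt (fun s => v + y * s) y t := (hasDerivAt_const_mul y).const_add v
  have hp0 : √(u + x * t) ≠ 0 := (Real.sqrt_pos.2 hP).ne'
  have hr0 : √(v + y * t) ≠ 0 := (Real.sqrt_pos.2 hR).ne'
  have hquot := (hasDerivAt_sqrt_affine hP).div (hasDerivAt_sqrt_affine hR) hr0
  refine (((hu.const_mul 3).sub ((hv.inv hR.ne').const_mul 3)).add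
    (hquot.const_mul (2 / √Q))).congr_deriv ?_
  have hr2 : v + y * t = √(v + y * t) ^ 2 := (Real.sq_sqrt hR.le).symm
  set r := √(v + y * t)
  rw [bellmanDeriv, hr2]
  field_simp
  ring

lemma hasDerivAt_bellmanDeriv_line (q : ℝ) (hP : 0 < u + x * t) (hR : 0 < v + y * t) :
    HasDerivAt (fun s => bellmanDeriv q √(u + x * s) √(v + y * s) x y)
      (bellmanDeriv2 q √(u + x * t) √(v + y * t) x y) t := by
  have hp := hasDerivAt_sqrt_affine hP
  have hr := hasDerivAt_sqrt_affine hR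
  have hp0 : √(u + x * t) ≠ 0 := (Real.sqrt_pos.2 hP).ne'
  have hr0 : √(v + y * t) ≠ 0 := (Real.sqrt_pos.2 hR).ne'
  have h₁ := (hasDerivAt_const t (3 * y)).div (hr.pow 4) (pow_ne_zero 4 hr0)
  have h₂ := (hasDerivAt_const t x).div ((hp.const_mul 2).mul hr)
    (mul_ne_zero (mul_ne_zero two_ne_zero hp0) hr0)
  have h₃ := (hp.mul_const y).div ((hr.pow 3).const_mul 2)
    (mul_ne_zero two_ne_zero (pow_ne_zero 3 hr0))
  refine (((hasDerivAt_const t (3 * x)).add h₁).add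
    ((h₂.sub h₃).const_mul (2 / q))).congr_deriv ?_
  simp only [Pi.pow_apply, Pi.mul_apply, bellmanDeriv2]
  field_simp
  ring

end Line

lemma bellmanDeriv2_le {q p r : ℝ} (x y : ℝ) (hq : 0 < q) (hp : 0 < p) (hr : 0 < r)
    (hpr : p * r ≤ 2 * q) : bellmanDeriv2 q p r x y ≤ -(x ^ 2 / (8 * q ^ 2 * p ^ 2)) := by
  rw [← sub_nonneg]
  have key : -(x ^ 2 / (8 * q ^ 2 * p ^ 2)) - bellmanDeriv2 q p r x y =
      ((q * r ^ 5 * x + 2 * q * p ^ 2 * r ^ 3 * y) ^ 2 + q * r ^ 10 * (q - p * r / 2) * x ^ 2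
        + q ^ 2 * p ^ 3 * r ^ 5 * (24 * q - 10 * p * r) * y ^ 2)
        / (4 * q ^ 3 * p ^ 3 * r ^ 11) := by
    rw [bellmanDeriv2]
    field_simp
    ring
  rw [key]
  have h₁ : 0 ≤ q - p * r / 2 := by linarith
  have h₂ : 0 ≤ 24 * q - 10 * p * r := by linarith
  positivity

lemma bellman_nonneg (Q : ℝ) {u v : ℝ} (hv : 0 < v) (huv : 1 ≤ u * v) :
    0 ≤ bellman Q u v := by
  have hinv : v⁻¹ ≤ u := by rw [inv_le_iff_one_le_mul₀ hv]; linarith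
  have hsqrt : 0 ≤ 2 / √Q * (√u / √v) := by positivity
  rw [bellman]
  linarith

lemma bellman_le_five_mul {Q u v : ℝ} (hQ : 1 ≤ Q) (hv : 0 < v) (huv : 1 ≤ u * v) :
    bellman Q u v ≤ 5 * u := by
  have hu : 0 < u := pos_of_mul_pos_left (one_pos.trans_le huv) hv.le
  have hQ' : 2 / √Q ≤ 2 := div_le_self zero_le_two (Real.one_le_sqrt.2 hQ)
  have hsqrt : √u / √v ≤ u := by
    rw [← Real.sqrt_div' u hv.le, Real.sqrt_le_iff, div_le_iff₀ hv]
    constructor <;> nlinarith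
  rw [bellman]
  nlinarith [inv_pos.2 hv, div_nonneg (Real.sqrt_nonneg u) (Real.sqrt_nonneg v)]

lemma bellmanDeriv2_line_le {Q u v x y t : ℝ} (hP : u + x * t ∈ Ioc 0 (2 * u))
    (hR : v + y * t ∈ Ioc 0 (2 * v)) (huv : u * v ≤ Q) :
    bellmanDeriv2 √Q √(u + x * t) √(v + y * t) x y ≤ -(x ^ 2 / (16 * Q * u)) := by
  obtain ⟨hP₀, hP₁⟩ := hP
  obtain ⟨hR₀, hR₁⟩ := hR
  have hu : 0 < u := by linarith
  have hQ : 0 < Q := (mul_pos hu (by linarith)).trans_le huv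
  have hpr : √(u + x * t) * √(v + y * t) ≤ 2 * √Q := by
    rw [← Real.sqrt_mul hP₀.le, Real.sqrt_le_iff, mul_pow, Real.sq_sqrt hQ.le]
    refine ⟨by positivity, ?_⟩
    nlinarith [mul_le_mul hP₁ hR₁ hR₀.le (by linarith)]
  calc bellmanDeriv2 √Q √(u + x * t) √(v + y * t) x y
      ≤ -(x ^ 2 / (8 * √Q ^ 2 * √(u + x * t) ^ 2)) :=
        bellmanDeriv2_le x y (Real.sqrt_pos.2 hQ) (Real.sqrt_pos.2 hP₀) (Real.sqrt_pos.2 hR₀)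
          hpr
    _ = -(x ^ 2 / (8 * Q * (u + x * t))) := by rw [Real.sq_sqrt hQ.le, Real.sq_sqrt hP₀.le]
    _ ≤ -(x ^ 2 / (8 * Q * (2 * u))) := by gcongr
    _ = -(x ^ 2 / (16 * Q * u)) := by ring

theorem bellman_midpoint_add_le {Q u v x y : ℝ} (hux : 0 < u - x) (hux' : 0 < u + x)
    (hvy : 0 < v - y) (hvy' : 0 < v + y) (huv : u * v ≤ Q) :
    (bellman Q (u - x) (v - y) + bellman Q (u + x) (v + y)) / 2 + x ^ 2 / (32 * Q * u)
      ≤ bellman Q u v := by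
  have hP (t) (ht : t ∈ Icc (-1 : ℝ) 1) := affine_mem_Ioc hux hux' ht
  have hR (t) (ht : t ∈ Icc (-1 : ℝ) 1) := affine_mem_Ioc hvy hvy' ht
  have key := average_endpoints_add_le_of_deriv2_le
    (f := fun s => bellman Q (u + x * s) (v + y * s))
    (fun t ht => hasDerivAt_bellman_line (hP t ht).1 (hR t ht).1)
    (fun t ht => hasDerivAt_bellmanDeriv_line _ (hP t (Ioo_subset_Icc_self ht)).1
      (hR t (Ioo_subset_Icc_self ht)).1)
    (fun t ht => bellmanDeriv2_line_le (hP t (Ioo_subset_Icc_self ht))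
      (hR t (Ioo_subset_Icc_self ht)) huv)
  simp only [mul_neg, mul_one, mul_zero, add_zero, ← sub_eq_add_neg] at key
  convert key using 2
  ring

lemma len_pos (I : ℤ × ℤ) : 0 < len I := zpow_pos two_pos _

lemma len_leftHalf (I : ℤ × ℤ) : len (leftHalf I) = len I / 2 := by
  rw [len, len, leftHalf, neg_add, zpow_add₀ two_ne_zero, zpow_neg_one, div_eq_mul_inv]

lemma len_rightHalf (I : ℤ × ℤ) : len (rightHalf I) = len I / 2 := len_leftHalf I

lemma dyadicI_leftHalf_union_rightHalf (I : ℤ × ℤ) :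
    dyadicI (leftHalf I) ∪ dyadicI (rightHalf I) = dyadicI I := by
  have hL : (2 : ℝ) ^ (-(I.1 + 1)) = 2 ^ (-I.1) / 2 := len_leftHalf I
  have hL₀ : (0 : ℝ) < 2 ^ (-I.1) := zpow_pos two_pos _
  simp only [dyadicI, leftHalf, rightHalf, hL]
  push_cast
  set L : ℝ := 2 ^ (-I.1)
  rw [Ico_union_Ico_eq_Ico]
  · congr 1 <;> ring
  all_goals linarith

lemma disjoint_dyadicI_leftHalf_rightHalf (I : ℤ × ℤ) :
    Disjoint (dyadicI (leftHalf I)) (dyadicI (rightHalf I)) := by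
  simp only [dyadicI, leftHalf, rightHalf]
  push_cast
  rw [add_assoc, one_add_one_eq_two]
  exact Ico_disjoint_Ico_same

lemma volume_dyadicI (I : ℤ × ℤ) : volume (dyadicI I) = ENNReal.ofReal (len I) := by
  rw [dyadicI, Real.volume_Ico, len]
  ring_nf

lemma le_fst_of_dyadicI_subset {I K : ℤ × ℤ} (h : dyadicI I ⊆ dyadicI K) : K.1 ≤ I.1 := by
  have hvol := measure_mono (μ := volume) h
  rw [volume_dyadicI, volume_dyadicI, ENNReal.ofReal_le_ofReal_iff (len_pos K).le, len, len,
    zpow_le_zpow_iff_right₀ one_lt_two] at hvol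
  exact neg_le_neg_iff.1 hvol

lemma dyadicI_subset_iff (K : ℤ × ℤ) (n : ℕ) (a : ℤ) :
    dyadicI (K.1 + n, a) ⊆ dyadicI K ↔ K.2 * 2 ^ n ≤ a ∧ a < (K.2 + 1) * 2 ^ n := by
  have hL : (0 : ℝ) < 2 ^ (-(K.1 + n)) := zpow_pos two_pos _
  have hK : (2 : ℝ) ^ (-K.1) = 2 ^ n * 2 ^ (-(K.1 + n)) := by
    rw [← zpow_natCast, ← zpow_add₀ two_ne_zero]
    ring_nf
  simp only [dyadicI, hK]
  rw [Ico_subset_Ico_iff (by linarith), ← mul_assoc, ← mul_assoc,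
    mul_le_mul_iff_of_pos_right hL, mul_le_mul_iff_of_pos_right hL, ← Int.add_one_le_iff]
  norm_cast

lemma dyadicI_subset_half {I K : ℤ × ℤ} (h : dyadicI I ⊆ dyadicI K) (hne : I ≠ K) :
    dyadicI I ⊆ dyadicI (leftHalf K) ∨ dyadicI I ⊆ dyadicI (rightHalf K) := by
  obtain ⟨i, a⟩ := I
  obtain ⟨n, rfl⟩ := Int.le.dest (le_fst_of_dyadicI_subset h)
  rw [dyadicI_subset_iff] at h
  rcases n with _ | n
  · exact absurd (Prod.ext (by simp) (by simp at h; omega)) hne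
  have hK : K.1 + ((n + 1 : ℕ) : ℤ) = (leftHalf K).1 + n := by simp [leftHalf]; ring
  rw [hK, dyadicI_subset_iff, show (leftHalf K).1 = (rightHalf K).1 from rfl, dyadicI_subset_iff]
  simp only [leftHalf, rightHalf, pow_succ] at h ⊢
  rcases lt_or_ge a ((2 * K.2 + 1) * 2 ^ n) with ha | ha
  · left; constructor <;> linarith
  · right; constructor <;> linarith

lemma integrableOn_dyadicI {f : ℝ → ℝ} (hf : LocallyIntegrable f volume) (I : ℤ × ℤ) :
    IntegrableOn f (dyadicI I) :=
  (hf.integrableOn_isCompact isCompact_Icc).mono_set Ico_subset_Icc_self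

lemma avg_eq_add_div_two {f : ℝ → ℝ} (hf : LocallyIntegrable f volume) (I : ℤ × ℤ) :
    avg f I = (avg f (leftHalf I) + avg f (rightHalf I)) / 2 := by
  rw [avg, avg, avg, ← dyadicI_leftHalf_union_rightHalf,
    setIntegral_union (disjoint_dyadicI_leftHalf_rightHalf I) measurableSet_Ico
      (integrableOn_dyadicI hf _) (integrableOn_dyadicI hf _), len_leftHalf, len_rightHalf]
  ring

lemma avg_pos {w : ℝ → ℝ} (hw_pos : ∀ x, 0 < w x) (hw : LocallyIntegrable w volume)
    (I : ℤ × ℤ) : 0 < avg w I := by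
  refine mul_pos (inv_pos.2 (len_pos I)) ?_
  rw [setIntegral_pos_iff_support_of_nonneg_ae (ae_of_all _ fun x => (hw_pos x).le)
    (integrableOn_dyadicI hw I), Function.support_eq_univ fun x => (hw_pos x).ne', univ_inter,
    volume_dyadicI]
  exact ENNReal.ofReal_pos.2 (len_pos I)

lemma one_le_avg_mul_avg_inv {w : ℝ → ℝ} (hw_pos : ∀ x, 0 < w x)
    (hw : LocallyIntegrable w volume) (hw_inv : LocallyIntegrable (fun x => (w x)⁻¹) volume)
    (I : ℤ × ℤ) : 1 ≤ avg w I * avg (fun x => (w x)⁻¹) I := by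
  set c := avg w I
  have hc : 0 < c := avg_pos hw_pos hw I
  -- the tangent line of `s ↦ s⁻¹` at `s = c`
  have tangent (x : ℝ) : 2 / c - w x / c ^ 2 ≤ (w x)⁻¹ := by
    have hx := hw_pos x
    have : (w x)⁻¹ - (2 / c - w x / c ^ 2) = (w x - c) ^ 2 / (w x * c ^ 2) := by
      field_simp
      ring
    linarith [div_nonneg (sq_nonneg (w x - c)) (by positivity : 0 ≤ w x * c ^ 2)]
  have hconst : IntegrableOn (fun _ => 2 / c) (dyadicI I) :=
    integrableOn_const (by simp [volume_dyadicI])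
  have hwc : IntegrableOn (fun x => w x / c ^ 2) (dyadicI I) :=
    (integrableOn_dyadicI hw I).div_const _
  have hint : ∫ x in dyadicI I, (2 / c - w x / c ^ 2) ≤ ∫ x in dyadicI I, (w x)⁻¹ :=
    setIntegral_mono (hconst.sub hwc) (integrableOn_dyadicI hw_inv I) tangent
  have hw_int : ∫ x in dyadicI I, w x = len I * c := by
    simp only [c, avg]
    field_simp [(len_pos I).ne']
  rw [integral_sub hconst hwc, setIntegral_const, integral_div, hw_int, measureReal_def,
    volume_dyadicI, ENNReal.toReal_ofReal (len_pos I).le, smul_eq_mul] at hint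
  calc 1 = c * ((len I)⁻¹ * (len I * (2 / c) - len I * c / c ^ 2)) := by
        field_simp [(len_pos I).ne']
        ring
    _ ≤ c * ((len I)⁻¹ * ∫ x in dyadicI I, (w x)⁻¹) :=
        mul_le_mul_of_nonneg_left
          (mul_le_mul_of_nonneg_left hint (inv_nonneg.2 (len_pos I).le)) hc.le

section Telescoping

variable {F D : ℤ × ℤ → ℝ}

lemma sum_len_mul_le_of_depth_lt (hF : ∀ I, 0 ≤ F I) (hD : ∀ I, 0 ≤ D I)
    (hsplit : ∀ I, D I + (F (leftHalf I) + F (rightHalf I)) / 2 ≤ F I) (N : ℕ) :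
    ∀ (J : ℤ × ℤ) (S : Finset (ℤ × ℤ)), (∀ I ∈ S, dyadicI I ⊆ dyadicI J) →
      (∀ I ∈ S, I.1 < J.1 + N) → ∑ I ∈ S, len I * D I ≤ len J * F J := by
  classical
  induction N with
  | zero =>
    intro J S hS hdepth
    have hS_empty : S = ∅ := Finset.eq_empty_of_forall_notMem fun I hI => by
      have := le_fst_of_dyadicI_subset (hS I hI)
      have := hdepth I hI
      omega
    simpa [hS_empty] using mul_nonneg (len_pos J).le (hF J)
  | succ N ih =>
    intro J S hS hdepth
    set S' := S.erase J
    have hhalf (I) (hI : I ∈ S') := dyadicI_subset_half (hS I (Finset.mem_of_mem_erase hI))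
      (Finset.ne_of_mem_erase hI)
    have hdepth' (I) (hI : I ∈ S') : I.1 < J.1 + 1 + N := by
      have := hdepth I (Finset.mem_of_mem_erase hI)
      push_cast at this
      omega
    have hleft := ih (leftHalf J) (S'.filter fun I => dyadicI I ⊆ dyadicI (leftHalf J))
      (fun I hI => (Finset.mem_filter.1 hI).2) fun I hI => hdepth' I (Finset.mem_filter.1 hI).1
    have hright := ih (rightHalf J) (S'.filter fun I => ¬dyadicI I ⊆ dyadicI (leftHalf J))
      (fun I hI => (hhalf I (Finset.mem_filter.1 hI).1).resolve_left (Finset.mem_filter.1 hI).2)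
      fun I hI => hdepth' I (Finset.mem_filter.1 hI).1
    calc ∑ I ∈ S, len I * D I ≤ ∑ I ∈ insert J S', len I * D I :=
          Finset.sum_le_sum_of_subset_of_nonneg (Finset.insert_erase_subset J S)
            fun I _ _ => mul_nonneg (len_pos I).le (hD I)
      _ = len J * D J + ∑ I ∈ S', len I * D I := Finset.sum_insert (Finset.notMem_erase J S)
      _ ≤ len J * D J
            + (len (leftHalf J) * F (leftHalf J) + len (rightHalf J) * F (rightHalf J)) := by
          rw [← Finset.sum_filter_add_sum_filter_not S'
            fun I => dyadicI I ⊆ dyadicI (leftHalf J)]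
          linarith
      _ = len J * (D J + (F (leftHalf J) + F (rightHalf J)) / 2) := by
          rw [len_leftHalf, len_rightHalf]
          ring
      _ ≤ len J * F J := mul_le_mul_of_nonneg_left (hsplit J) (len_pos J).le

theorem sum_len_mul_le_of_split (hF : ∀ I, 0 ≤ F I) (hD : ∀ I, 0 ≤ D I)
    (hsplit : ∀ I, D I + (F (leftHalf I) + F (rightHalf I)) / 2 ≤ F I)
    (J : ℤ × ℤ) (S : Finset (ℤ × ℤ))
    (hS : ∀ I ∈ S, dyadicI I ⊆ dyadicI J) : ∑ I ∈ S, len I * D I ≤ len J * F J := by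
  obtain ⟨M, hM⟩ := (S.image Prod.fst).exists_le
  refine sum_len_mul_le_of_depth_lt hF hD hsplit (M - J.1 + 1).toNat J S hS fun I hI => ?_
  have := hM I.1 (Finset.mem_image_of_mem _ hI)
  omega

end Telescoping

def bellmanAt (Q : ℝ) (w : ℝ → ℝ) (I : ℤ × ℤ) : ℝ :=
  bellman Q (avg w I) (avg (fun x => (w x)⁻¹) I)

lemma exists_avg_halves_eq {f : ℝ → ℝ} (hf : LocallyIntegrable f volume) (I : ℤ × ℤ) :
    ∃ x, avg f (leftHalf I) = avg f I - x ∧ avg f (rightHalf I) = avg f I + x :=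
  ⟨(avg f (rightHalf I) - avg f (leftHalf I)) / 2, by linarith [avg_eq_add_div_two hf I],
    by linarith [avg_eq_add_div_two hf I]⟩

lemma bellmanAt_split {Q : ℝ} {w : ℝ → ℝ} (hw_pos : ∀ x, 0 < w x)
    (hw : LocallyIntegrable w volume) (hw_inv : LocallyIntegrable (fun x => (w x)⁻¹) volume)
    (hQ : ∀ I, avg w I * avg (fun x => (w x)⁻¹) I ≤ Q) (I : ℤ × ℤ) :
    ((avg w (rightHalf I) - avg w (leftHalf I)) / (2 * avg w I)) ^ 2 * avg w I / (32 * Q)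
      + (bellmanAt Q w (leftHalf I) + bellmanAt Q w (rightHalf I)) / 2 ≤ bellmanAt Q w I := by
  have hw_inv_pos (x : ℝ) : 0 < (w x)⁻¹ := inv_pos.2 (hw_pos x)
  obtain ⟨x, hl, hr⟩ := exists_avg_halves_eq hw I
  obtain ⟨y, hl', hr'⟩ := exists_avg_halves_eq hw_inv I
  have key := bellman_midpoint_add_le (Q := Q)
    (hl ▸ avg_pos hw_pos hw _) (hr ▸ avg_pos hw_pos hw _)
    (hl' ▸ avg_pos hw_inv_pos hw_inv _) (hr' ▸ avg_pos hw_inv_pos hw_inv _) (hQ I)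
  have hu := avg_pos hw_pos hw I
  have hdrop : ((avg w I + x - (avg w I - x)) / (2 * avg w I)) ^ 2 * avg w I / (32 * Q)
      = x ^ 2 / (32 * Q * avg w I) := by
    field_simp
    ring
  simp only [bellmanAt, hl, hr, hl', hr', hdrop]
  linarith

/-- Wittwer's sharp square-function bound: for `w ∈ A₂^d`,
`(1/|J|) Σ_{I∈D(J)} ((m_{I⁻}w − m_{I⁺}w)/(2 m_I w))² |I| m_I w ≤ C ‖w‖_{A₂^d} m_J w`. -/
theorem wittwer_square_function
    : ∃ C : ℝ, 0 < C ∧ ∀ (w : ℝ → ℝ), (∀ x, 0 < w x) →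
      LocallyIntegrable w volume →
      LocallyIntegrable (fun x => (w x)⁻¹) volume →
      BddAbove (Set.range fun I : ℤ × ℤ => avg w I * avg (fun x => (w x)⁻¹) I) →
      ∀ (J : ℤ × ℤ) (S : Finset (ℤ × ℤ)), (∀ I ∈ S, dyadicI I ⊆ dyadicI J) →
        (len J)⁻¹ * ∑ I ∈ S,
            ((avg w (rightHalf I) - avg w (leftHalf I)) / (2 * avg w I)) ^ 2 * len I * avg w I
          ≤ C * A2const w * avg w J := by
  refine ⟨160, by norm_num, fun w hw_pos hw hw_inv hbdd J S hS => ?_⟩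
  set Q := A2const w
  have hQ (I : ℤ × ℤ) : avg w I * avg (fun x => (w x)⁻¹) I ≤ Q := le_ciSup hbdd I
  have hcs := one_le_avg_mul_avg_inv hw_pos hw hw_inv
  have hv (I : ℤ × ℤ) : 0 < avg (fun x => (w x)⁻¹) I :=
    avg_pos (fun x => inv_pos.2 (hw_pos x)) hw_inv I
  have hQ₁ : 1 ≤ Q := (hcs J).trans (hQ J)
  set D : ℤ × ℤ → ℝ := fun I =>
    ((avg w (rightHalf I) - avg w (leftHalf I)) / (2 * avg w I)) ^ 2 * avg w I / (32 * Q)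
  have htele := sum_len_mul_le_of_split (F := bellmanAt Q w) (D := D)
    (fun I => bellman_nonneg Q (hv I) (hcs I))
    (fun I => by have := avg_pos hw_pos hw I; positivity)
    (bellmanAt_split hw_pos hw hw_inv hQ) J S hS
  have hJ := bellman_le_five_mul hQ₁ (hv J) (hcs J)
  have hterm (I : ℤ × ℤ) : ((avg w (rightHalf I) - avg w (leftHalf I)) / (2 * avg w I)) ^ 2
      * len I * avg w I = 32 * Q * (len I * D I) := by
    have := avg_pos hw_pos hw I
    simp only [D]
    field_simp
  rw [Finset.sum_congr rfl fun I _ => hterm I, ← Finset.mul_sum]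
  calc (len J)⁻¹ * (32 * Q * ∑ I ∈ S, len I * D I)
      ≤ (len J)⁻¹ * (32 * Q * (len J * (5 * avg w J))) := by
        have := len_pos J
        gcongr
        exact htele.trans (mul_le_mul_of_nonneg_left hJ this.le)
    _ = 160 * Q * avg w J := by
        field_simp [(len_pos J).ne']
        ring
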